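/- Consider the 6-dimensional spin representation Δ₆ ≅ ℂ⁸. The element a·(e₁·e₂·e₃·e₄ + e₁·e₂·e₅·e₆ + e₃·e₄·e₅·e₆ + 3), a > 0, acts on each half-spin module Δ₆^± as a symmetric endomorphism with eigenvalues (0, 4a, 4a, 4a). -/

import Mathlib

open scoped ComplexInnerProductSpace

/-!
Put `Kⱼ = i·e₂ⱼ₊₁e₂ⱼ₊₂` for `j = 0, 1, 2`. These are commuting symmetric involutions, and
`e₂ⱼ₊₁` anticommutes with `Kⱼ` and commutes with the other two, so starting from one joint
eigenvector every sign pattern `s ∈ {±1}³` occurs as a joint eigenvalue. Joint eigenvectors for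
distinct patterns are orthogonal, so the `8 = dim Δ₆` normalised ones form an orthonormal basis.
In this basis the volume element `i·K₀K₁K₂` acts by `i·s₀s₁s₂`, and the given element
`a·(3 - K₀K₁ - K₀K₂ - K₁K₂)` acts by `a·(3 - s₀s₁ - s₀s₂ - s₁s₂)`. On the `±i`-eigenspace
`s₀s₁s₂ = ±1`: the pattern `(±, ±, ±)` gives `0`, the three patterns with a single `±` give `4a`.
-/

open Module

def boolSign (b : Bool) : ℂ := if b then 1 else -1

@[simp] theorem boolSign_true : boolSign true = 1 := rfl
@[simp] theorem boolSign_false : boolSign false = -1 := rfl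

theorem boolSign_mul_self (b : Bool) : boolSign b * boolSign b = 1 := by cases b <;> simp

theorem boolSign_not (b : Bool) : boolSign (!b) = -boolSign b := by cases b <;> simp

theorem boolSign_mul (a b : Bool) : boolSign a * boolSign b = boolSign (a == b) := by
  cases a <;> cases b <;> simp

theorem boolSign_injective : Function.Injective boolSign := by
  intro a b h
  cases a <;> cases b <;> first | rfl | norm_num at h

theorem starRingEnd_boolSign (b : Bool) : starRingEnd ℂ (boolSign b) = boolSign b := by
  cases b <;> simp

def IsCliffordFamily {κ E : Type*} [DecidableEq κ] [AddCommGroup E] [Module ℂ E]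
    (c : κ → End ℂ E) : Prop :=
  ∀ i j ψ, c i (c j ψ) + c j (c i ψ) = if i = j then (-2 : ℂ) • ψ else 0

def bivector {κ E : Type*} [AddCommGroup E] [Module ℂ E] (c : κ → End ℂ E) (i j : κ) :
    End ℂ E :=
  Complex.I • (c i * c j)

theorem apply_apply_of_bivector_apply {κ E : Type*} [AddCommGroup E] [Module ℂ E]
    {c : κ → End ℂ E} {i j : κ} {ψ : E} {α : ℂ} (h : bivector c i j ψ = α • ψ) :
    c i (c j ψ) = (-Complex.I * α) • ψ := by
  have h' : Complex.I • c i (c j ψ) = α • ψ := h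
  rw [mul_smul, ← h', smul_smul, neg_mul, Complex.I_mul_I, neg_neg, one_smul]

namespace IsCliffordFamily

variable {κ E : Type*} [DecidableEq κ] [AddCommGroup E] [Module ℂ E] {c : κ → End ℂ E}
  {i j k l : κ}

theorem mul_self (hc : IsCliffordFamily c) (i : κ) : c i * c i = -1 := by
  ext ψ
  have h := hc i i ψ
  rw [if_pos rfl] at h
  simp only [End.mul_apply, LinearMap.neg_apply, End.one_apply]
  linear_combination (norm := module) (1 / 2 : ℂ) • h

theorem anticomm (hc : IsCliffordFamily c) (h : i ≠ j) : c i * c j = -(c j * c i) := by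
  ext ψ
  exact eq_neg_of_add_eq_zero_left ((hc i j ψ).trans (if_neg h))

theorem injective (hc : IsCliffordFamily c) (i : κ) : Function.Injective (c i) := by
  refine Function.LeftInverse.injective (g := -c i) fun ψ => ?_
  simpa [neg_eq_iff_eq_neg] using congr($(hc.mul_self i) ψ)

theorem bivector_mul_self (hc : IsCliffordFamily c) (h : i ≠ j) :
    bivector c i j * bivector c i j = 1 := by
  have : c i * c j * (c i * c j) = -1 := by
    calc c i * c j * (c i * c j) = c i * (c j * c i) * c j := by simp only [mul_assoc]
      _ = -(c i * c i * (c j * c j)) := by rw [hc.anticomm h.symm]; noncomm_ring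
      _ = -1 := by rw [hc.mul_self, hc.mul_self]; simp
  rw [bivector, smul_mul_smul_comm, Complex.I_mul_I, this, neg_one_smul, neg_neg]

theorem commute_bivector (hc : IsCliffordFamily c) (hi : k ≠ i) (hj : k ≠ j) :
    Commute (c k) (bivector c i j) := by
  refine Commute.smul_right ?_ _
  rw [Commute, SemiconjBy, ← mul_assoc, hc.anticomm hi, neg_mul, mul_assoc, hc.anticomm hj,
    mul_neg, neg_neg, mul_assoc]

theorem bivector_mul_anticomm (hc : IsCliffordFamily c) (h : i ≠ j) :
    bivector c i j * c i = -(c i * bivector c i j) := by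
  rw [bivector, smul_mul_assoc, mul_smul_comm, ← smul_neg, mul_assoc, hc.anticomm h.symm,
    mul_neg]

theorem commute_bivector_bivector (hc : IsCliffordFamily c) (hki : k ≠ i) (hkj : k ≠ j)
    (hli : l ≠ i) (hlj : l ≠ j) : Commute (bivector c k l) (bivector c i j) :=
  ((hc.commute_bivector hki hkj).mul_left (hc.commute_bivector hli hlj)).smul_left _

end IsCliffordFamily

theorem IsCliffordFamily.isSymmetric_bivector {κ E : Type*} [DecidableEq κ]
    [NormedAddCommGroup E] [InnerProductSpace ℂ E] {c : κ → End ℂ E}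
    (hc : IsCliffordFamily c) (hsk : ∀ i (ψ φ : E), ⟪c i ψ, φ⟫ = -⟪ψ, c i φ⟫) {i j : κ}
    (h : i ≠ j) :
    (bivector c i j).IsSymmetric := by
  intro ψ φ
  have hji : c j (c i φ) = -c i (c j φ) := congr($(hc.anticomm h.symm) φ)
  simp only [bivector, LinearMap.smul_apply, End.mul_apply, inner_smul_left, inner_smul_right,
    Complex.conj_I, hsk, hji, inner_neg_right]
  ring

theorem Module.Basis.eigenspace_le_span {σ R M : Type*} [Fintype σ] [CommRing R]
    [NoZeroDivisors R] [AddCommGroup M] [Module R M] (b : Basis σ R M) {V : End R M}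
    {ν : σ → R} (hV : ∀ s, V (b s) = ν s • b s) (μ : R) :
    End.eigenspace V μ ≤ Submodule.span R (b '' {s | ν s = μ}) := by
  intro ψ hψ
  rw [End.mem_eigenspace_iff] at hψ
  have hcoeff : ∀ s, (ν s - μ) * b.repr ψ s = 0 := by
    refine Fintype.linearIndependent_iff.mp b.linearIndependent _ ?_
    calc ∑ s, ((ν s - μ) * b.repr ψ s) • b s
        = V (∑ s, b.repr ψ s • b s) - μ • ∑ s, b.repr ψ s • b s := by
          simp only [map_sum, map_smul, hV, Finset.smul_sum, ← Finset.sum_sub_distrib, smul_smul,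
            sub_mul, sub_smul, mul_comm]
      _ = 0 := by rw [b.sum_repr, hψ, sub_self]
  rw [← b.sum_repr ψ]
  refine Submodule.sum_mem _ fun s _ => ?_
  by_cases hs : ν s = μ
  · exact Submodule.smul_mem _ _ (Submodule.subset_span ⟨s, hs, rfl⟩)
  · rw [(mul_eq_zero.mp (hcoeff s)).resolve_left (sub_ne_zero.mpr hs), zero_smul]
    exact Submodule.zero_mem _

theorem OrthonormalBasis.exists_orthonormalBasis_eigenspace {σ ι 𝕜 E : Type*} [Fintype σ]
    [Fintype ι] [RCLike 𝕜] [NormedAddCommGroup E] [InnerProductSpace 𝕜 E]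
    (b : OrthonormalBasis σ 𝕜 E) {V : End 𝕜 E} {ν : σ → 𝕜}
    (hV : ∀ s, V (b s) = ν s • b s) {μ : 𝕜} {e : ι → σ} (he : Function.Injective e)
    (hrange : ∀ s, ν s = μ ↔ s ∈ Set.range e) :
    ∃ b' : OrthonormalBasis ι 𝕜 (End.eigenspace V μ), ∀ m, (b' m : E) = b (e m) := by
  set W := End.eigenspace V μ
  have hmem : ∀ m, b (e m) ∈ W := fun m =>
    End.mem_eigenspace_iff.mpr ((hrange (e m)).mpr ⟨m, rfl⟩ ▸ hV (e m))
  set v : ι → W := fun m => ⟨b (e m), hmem m⟩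
  have hon : Orthonormal 𝕜 v := W.subtypeₗᵢ.orthonormal_comp_iff.mp (b.orthonormal.comp e he)
  have hspan : ⊤ ≤ Submodule.span 𝕜 (Set.range v) := by
    rintro ψ -
    have hset : W.subtype '' Set.range v = b.toBasis '' {s | ν s = μ} := by
      ext x
      simp [v, hrange]
    have hψ := b.toBasis.eigenspace_le_span (by simpa using hV) μ ψ.2
    rw [← hset, Submodule.span_image, Submodule.mem_map] at hψ
    obtain ⟨φ, hφ, hφψ⟩ := hψ
    rwa [← Subtype.ext hφψ]
  exact ⟨OrthonormalBasis.mk hon hspan, fun m => by simp [v]⟩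

theorem OrthonormalBasis.isSymmetric_of_apply_eq_smul {σ 𝕜 E : Type*} [Fintype σ] [RCLike 𝕜]
    [NormedAddCommGroup E] [InnerProductSpace 𝕜 E] (b : OrthonormalBasis σ 𝕜 E)
    {T : End 𝕜 E} {r : σ → 𝕜} (hr : ∀ s, starRingEnd 𝕜 (r s) = r s)
    (hT : ∀ s, T (b s) = r s • b s) : T.IsSymmetric := by
  classical
  have hform : (innerₛₗ 𝕜).comp T = (innerₛₗ 𝕜).compl₂ T := by
    refine LinearMap.ext_basis b.toBasis b.toBasis fun s s' => ?_
    simp only [LinearMap.comp_apply, LinearMap.compl₂_apply, innerₛₗ_apply_apply, b.coe_toBasis,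
      hT, inner_smul_left, inner_smul_right, hr, orthonormal_iff_ite.mp b.orthonormal]
    split_ifs with h
    · rw [h]
    · simp
  exact fun x y => congr($hform x y)

section JointEigenvectors

variable {ι E : Type*} [DecidableEq ι] [AddCommGroup E] [Module ℂ E] {K : ι → End ℂ E}

theorem apply_add_smul_apply_of_mul_self {L : End ℂ E} (hL : L * L = 1) (σ : Bool) (ψ : E) :
    L (ψ + boolSign σ • L ψ) = boolSign σ • (ψ + boolSign σ • L ψ) := by
  have hLL : L (L ψ) = ψ := congr($hL ψ)
  rw [map_add, map_smul, hLL, smul_add, smul_smul, boolSign_mul_self, one_smul, add_comm]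

theorem exists_add_smul_apply_ne_zero (L : End ℂ E) {ψ : E} (hψ : ψ ≠ 0) :
    ∃ σ : Bool, ψ + boolSign σ • L ψ ≠ 0 := by
  by_contra! h
  have h2ψ : (2 : ℂ) • ψ = 0 := by
    have hplus := h true
    have hminus := h false
    simp only [boolSign_true, boolSign_false] at hplus hminus
    linear_combination (norm := module) hplus + hminus
  exact hψ ((smul_eq_zero.mp h2ψ).resolve_left two_ne_zero)

theorem exists_jointEigenvector [Fintype ι] (hK : ∀ i, K i * K i = 1)
    (hcomm : ∀ i j, Commute (K i) (K j)) [Nontrivial E] :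
    ∃ (t : ι → Bool) (φ : E), φ ≠ 0 ∧ ∀ i, K i φ = boolSign (t i) • φ := by
  suffices ∀ S : Finset ι, ∃ (t : ι → Bool) (φ : E), φ ≠ 0 ∧
      ∀ i ∈ S, K i φ = boolSign (t i) • φ by
    simpa using this Finset.univ
  intro S
  induction S using Finset.induction_on with
  | empty =>
    obtain ⟨ψ, hψ⟩ := exists_ne (0 : E)
    exact ⟨fun _ => true, ψ, hψ, by simp⟩
  | insert j S hj ih =>
    obtain ⟨t, φ, hφ, hS⟩ := ih
    obtain ⟨σ, hσ⟩ := exists_add_smul_apply_ne_zero (K j) hφ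
    refine ⟨Function.update t j σ, φ + boolSign σ • K j φ, hσ, ?_⟩
    intro i hi
    rcases Finset.mem_insert.mp hi with rfl | hiS
    · simpa using apply_add_smul_apply_of_mul_self (hK i) σ φ
    · have hij : i ≠ j := by rintro rfl; exact hj hiS
      have hKij : K i (K j φ) = K j (K i φ) := congr($((hcomm i j).eq) φ)
      rw [Function.update_of_ne hij, map_add, map_smul, hKij, hS i hiS, map_smul, smul_comm,
        smul_add]

theorem jointEigenvector_apply_flip {g : ι → End ℂ E} (hanti : ∀ i, K i * g i = -(g i * K i))
    (hgcomm : ∀ i j, i ≠ j → Commute (K i) (g j)) {t : ι → Bool} {φ : E}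
    (hφ : ∀ i, K i φ = boolSign (t i) • φ) (j : ι) :
    ∀ i, K i (g j φ) = boolSign (Function.update t j (!t j) i) • g j φ := by
  intro i
  rcases eq_or_ne i j with rfl | hij
  · have := congr($(hanti i) φ)
    simp only [End.mul_apply, LinearMap.neg_apply] at this
    rw [this, hφ, map_smul, Function.update_self, boolSign_not, neg_smul]
  · have := congr($((hgcomm i j hij).eq) φ)
    simp only [End.mul_apply] at this
    rw [this, hφ, map_smul, Function.update_of_ne hij]

theorem exists_jointEigenvector_of_flip [Fintype ι] {g : ι → End ℂ E}
    (hg : ∀ i, Function.Injective (g i)) (hanti : ∀ i, K i * g i = -(g i * K i))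
    (hgcomm : ∀ i j, i ≠ j → Commute (K i) (g j)) {t : ι → Bool} {φ : E} (hφ0 : φ ≠ 0)
    (hφ : ∀ i, K i φ = boolSign (t i) • φ) (s : ι → Bool) :
    ∃ φ' : E, φ' ≠ 0 ∧ ∀ i, K i φ' = boolSign (s i) • φ' := by
  suffices ∀ S : Finset ι, ∀ (t : ι → Bool) (φ : E), φ ≠ 0 →
      (∀ i, K i φ = boolSign (t i) • φ) → (∀ i ∉ S, t i = s i) →
      ∃ φ' : E, φ' ≠ 0 ∧ ∀ i, K i φ' = boolSign (s i) • φ' from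
    this Finset.univ t φ hφ0 hφ (by simp)
  intro S
  induction S using Finset.induction_on with
  | empty =>
    intro t φ hφ0 hφ hts
    obtain rfl : t = s := funext fun i => hts i (Finset.notMem_empty i)
    exact ⟨φ, hφ0, hφ⟩
  | insert j S _ ih =>
    intro t φ hφ0 hφ hts
    by_cases htj : t j = s j
    · refine ih t φ hφ0 hφ fun i hi => ?_
      by_cases hij : i = j
      · exact hij ▸ htj
      · exact hts i (by simp [hij, hi])
    · refine ih _ (g j φ) ((map_ne_zero_iff _ (hg j)).mpr hφ0)
        (jointEigenvector_apply_flip hanti hgcomm hφ j) fun i hi => ?_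
      rcases eq_or_ne i j with rfl | hij
      · simpa [Bool.eq_not_iff] using htj
      · rw [Function.update_of_ne hij]
        exact hts i (by simp [hij, hi])

end JointEigenvectors

theorem exists_orthonormalBasis_jointEigenvectors {ι E : Type*} [Fintype ι] [DecidableEq ι]
    [NormedAddCommGroup E] [InnerProductSpace ℂ E] {K g : ι → End ℂ E}
    (hK : ∀ i, K i * K i = 1) (hcomm : ∀ i j, Commute (K i) (K j))
    (hsym : ∀ i, (K i).IsSymmetric) (hg : ∀ i, Function.Injective (g i))
    (hanti : ∀ i, K i * g i = -(g i * K i)) (hgcomm : ∀ i j, i ≠ j → Commute (K i) (g j))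
    (hdim : finrank ℂ E = 2 ^ Fintype.card ι) :
    ∃ b : OrthonormalBasis (ι → Bool) ℂ E, ∀ s i, K i (b s) = boolSign (s i) • b s := by
  have : Nontrivial E := Module.nontrivial_of_finrank_pos (by rw [hdim]; positivity)
  obtain ⟨t, φ, hφ0, hφ⟩ := exists_jointEigenvector hK hcomm
  choose v hv0 hv using exists_jointEigenvector_of_flip hg hanti hgcomm hφ0 hφ
  set u : (ι → Bool) → E := fun s => (‖v s‖ : ℂ)⁻¹ • v s
  have hu : ∀ s i, K i (u s) = boolSign (s i) • u s := by
    intro s i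
    simp only [u, map_smul, hv, smul_comm _ (boolSign (s i))]
  have hon : Orthonormal ℂ u := by
    refine ⟨fun s => norm_smul_inv_norm (hv0 s), fun {s s'} hss' => ?_⟩
    obtain ⟨i, hi⟩ := Function.ne_iff.mp hss'
    exact ((hsym i).orthogonalFamily_eigenspaces.isOrtho (boolSign_injective.ne hi)).inner_eq
      (End.mem_eigenspace_iff.mpr (hu s i)) (End.mem_eigenspace_iff.mpr (hu s' i))
  have hcard : Fintype.card (ι → Bool) = finrank ℂ E := by simp [hdim]
  refine ⟨(basisOfOrthonormalOfCardEqFinrank hon hcard).toOrthonormalBasis (by simpa using hon),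
    fun s i => ?_⟩
  simpa using hu s i

theorem IsCliffordFamily.exists_orthonormalBasis_bivector_eigenvectors {ι κ E : Type*}
    [Fintype ι] [DecidableEq ι] [DecidableEq κ] [NormedAddCommGroup E] [InnerProductSpace ℂ E]
    {c : κ → End ℂ E} (hc : IsCliffordFamily c)
    (hsk : ∀ i (ψ φ : E), ⟪c i ψ, φ⟫ = -⟪ψ, c i φ⟫) {p q : ι → κ}
    (hpq : Function.Injective (Sum.elim p q)) (hdim : finrank ℂ E = 2 ^ Fintype.card ι) :
    ∃ b : OrthonormalBasis (ι → Bool) ℂ E,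
      ∀ s i, bivector c (p i) (q i) (b s) = boolSign (s i) • b s := by
  have hpq' : ∀ i j, p i ≠ q j := fun i j => hpq.ne Sum.inl_ne_inr
  have hqp : ∀ i j, q i ≠ p j := fun i j => hpq.ne Sum.inr_ne_inl
  have hpp : ∀ i j, i ≠ j → p i ≠ p j := fun i j hij => hpq.ne (Sum.inl_injective.ne hij)
  have hqq : ∀ i j, i ≠ j → q i ≠ q j := fun i j hij => hpq.ne (Sum.inr_injective.ne hij)
  refine exists_orthonormalBasis_jointEigenvectors (g := fun i => c (p i))
    (fun i => hc.bivector_mul_self (hpq' i i)) (fun i j => ?_)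
    (fun i => hc.isSymmetric_bivector hsk (hpq' i i)) (fun i => hc.injective _)
    (fun i => hc.bivector_mul_anticomm (hpq' i i))
    (fun i j hij => (hc.commute_bivector (hpp j i hij.symm) (hpq' j i)).symm) hdim
  rcases eq_or_ne i j with rfl | hij
  · exact Commute.refl _
  · exact hc.commute_bivector_bivector (hpp i j hij) (hpq' i j) (hqp i j) (hqq i j hij)

-- The sign patterns with `s₀s₁s₂ = t` (read through `boolSign`); `A` vanishes only on the first.
def halfSpinSigns (t : Bool) : Fin 4 → Fin 3 → Bool :=
  ![![t, t, t], ![t, !t, !t], ![!t, t, !t], ![!t, !t, t]]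

theorem halfSpinSigns_injective (t : Bool) : Function.Injective (halfSpinSigns t) := by
  cases t <;> decide

theorem mem_range_halfSpinSigns_iff (t : Bool) (s : Fin 3 → Bool) :
    s ∈ Set.range (halfSpinSigns t) ↔ ((s 0 == s 1) == s 2) = t := by
  simp only [Set.mem_range]
  revert t s
  decide

theorem mul_three_sub_halfSpinSigns (a : ℝ) (t : Bool) (m : Fin 4) :
    (a : ℂ) * (3 - boolSign (halfSpinSigns t m 0) * boolSign (halfSpinSigns t m 1)
      - boolSign (halfSpinSigns t m 0) * boolSign (halfSpinSigns t m 2)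
      - boolSign (halfSpinSigns t m 1) * boolSign (halfSpinSigns t m 2))
      = (((![0, 4 * a, 4 * a, 4 * a] : Fin 4 → ℝ) m : ℝ) : ℂ) := by
  cases t <;> fin_cases m <;> simp [halfSpinSigns] <;> norm_num <;> ring

theorem IsCliffordFamily.exists_orthonormalBasis_spin6 {Δ : Type*} [NormedAddCommGroup Δ]
    [InnerProductSpace ℂ Δ] {c : Fin 6 → End ℂ Δ} (hc : IsCliffordFamily c)
    (hsk : ∀ i (ψ φ : Δ), ⟪c i ψ, φ⟫ = -⟪ψ, c i φ⟫) (hdim : finrank ℂ Δ = 8) :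
    ∃ b : OrthonormalBasis (Fin 3 → Bool) ℂ Δ, ∀ s,
      (c 0 ∘ₗ c 1 ∘ₗ c 2 ∘ₗ c 3 ∘ₗ c 4 ∘ₗ c 5) (b s)
          = (Complex.I * (boolSign (s 0) * boolSign (s 1) * boolSign (s 2))) • b s
      ∧ (c 0 * c 1 * c 2 * c 3 + c 0 * c 1 * c 4 * c 5 + c 2 * c 3 * c 4 * c 5) (b s)
          = -(boolSign (s 0) * boolSign (s 1) + boolSign (s 0) * boolSign (s 2)
              + boolSign (s 1) * boolSign (s 2)) • b s := by
  obtain ⟨b, hb⟩ := hc.exists_orthonormalBasis_bivector_eigenvectors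
    (p := (![0, 2, 4] : Fin 3 → Fin 6)) (q := ![1, 3, 5]) hsk (by decide) (by simp [hdim])
  refine ⟨b, fun s => ?_⟩
  have h01 : c 0 (c 1 (b s)) = (-Complex.I * boolSign (s 0)) • b s :=
    apply_apply_of_bivector_apply (hb s 0)
  have h23 : c 2 (c 3 (b s)) = (-Complex.I * boolSign (s 1)) • b s :=
    apply_apply_of_bivector_apply (hb s 1)
  have h45 : c 4 (c 5 (b s)) = (-Complex.I * boolSign (s 2)) • b s :=
    apply_apply_of_bivector_apply (hb s 2)
  constructor
  · simp only [LinearMap.comp_apply, h45, map_smul, h23, h01, smul_smul]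
    match_scalars
    linear_combination (-Complex.I * (boolSign (s 0) * boolSign (s 1) * boolSign (s 2)))
      * Complex.I_sq
  · simp only [LinearMap.add_apply, End.mul_apply, h45, map_smul, h23, h01, smul_smul,
      ← add_smul]
    match_scalars
    linear_combination (boolSign (s 0) * boolSign (s 1) + boolSign (s 0) * boolSign (s 2)
      + boolSign (s 1) * boolSign (s 2)) * Complex.I_sq

theorem stmt_16_general {Δ : Type*} [NormedAddCommGroup Δ] [InnerProductSpace ℂ Δ]
    (hdim : Module.finrank ℂ Δ = 8)
    (c : Fin 6 → Δ →ₗ[ℂ] Δ)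
    (hcl : ∀ i j ψ, c i (c j ψ) + c j (c i ψ) = if i = j then (-2 : ℂ) • ψ else 0)
    (hsk : ∀ i (ψ φ : Δ), ⟪c i ψ, φ⟫ = - ⟪ψ, c i φ⟫)
    (a : ℝ)
    (A : Δ → Δ)
    (hA : ∀ ψ, A ψ = ((a : ℝ) : ℂ) •
      (c 0 (c 1 (c 2 (c 3 ψ))) + c 0 (c 1 (c 4 (c 5 ψ))) + c 2 (c 3 (c 4 (c 5 ψ)))
        + (3 : ℂ) • ψ))
    (V : Δ →ₗ[ℂ] Δ)
    (hV : V = c 0 ∘ₗ c 1 ∘ₗ c 2 ∘ₗ c 3 ∘ₗ c 4 ∘ₗ c 5) :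
    (∀ ψ φ : Δ, ⟪A ψ, φ⟫ = ⟪ψ, A φ⟫)
    ∧ ∀ ε : ℂ, (ε = Complex.I ∨ ε = - Complex.I) →
        (∀ ψ ∈ Module.End.eigenspace V ε, A ψ ∈ Module.End.eigenspace V ε)
        ∧ ∃ b : OrthonormalBasis (Fin 4) ℂ (Module.End.eigenspace V ε),
            ∀ m, A (b m : Δ)
              = (((![0, 4 * a, 4 * a, 4 * a] : Fin 4 → ℝ) m : ℝ) : ℂ) • (b m : Δ) := by
  obtain ⟨b, hb⟩ := IsCliffordFamily.exists_orthonormalBasis_spin6 hcl hsk hdim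
  have hVb s : V (b s) = _ := hV ▸ (hb s).1
  set A' : End ℂ Δ := (a : ℂ) • (c 0 * c 1 * c 2 * c 3 + c 0 * c 1 * c 4 * c 5
    + c 2 * c 3 * c 4 * c 5 + (3 : ℂ) • 1)
  have hAA' ψ : A ψ = A' ψ := by simp [hA, A']
  have hAb s : A' (b s) = ((a : ℂ) * (3 - boolSign (s 0) * boolSign (s 1)
      - boolSign (s 0) * boolSign (s 2) - boolSign (s 1) * boolSign (s 2))) • b s := by
    simp only [A', LinearMap.smul_apply, LinearMap.add_apply, (hb s).2]
    module
  refine ⟨fun ψ φ => ?_, ?_⟩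
  · rw [hAA', hAA']
    exact b.isSymmetric_of_apply_eq_smul (fun s => by simp [starRingEnd_boolSign, map_ofNat])
      hAb ψ φ
  rintro ε hε
  obtain ⟨t, rfl⟩ : ∃ t, ε = Complex.I * boolSign t := by
    rcases hε with rfl | rfl
    exacts [⟨true, by simp⟩, ⟨false, by simp⟩]
  have hcomm : Commute V A' := b.toBasis.ext fun s => by
    simp [hVb, hAb, smul_smul, mul_comm]
  obtain ⟨b', hb'⟩ := b.exists_orthonormalBasis_eigenspace hVb (halfSpinSigns_injective t)
    fun s => by rw [mem_range_halfSpinSigns_iff, boolSign_mul, boolSign_mul,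
      mul_right_inj' Complex.I_ne_zero, boolSign_injective.eq_iff]
  refine ⟨fun ψ hψ => hAA' ψ ▸ End.mapsTo_genEigenspace_of_comm hcomm _ 1 hψ, b',
    fun m => ?_⟩
  rw [hAA', hb', hAb, mul_three_sub_halfSpinSigns]

/-- In the 6-dimensional spin representation `Δ₆ ≅ ℂ⁸`, the element
`a·(e₁·e₂·e₃·e₄ + e₁·e₂·e₅·e₆ + e₃·e₄·e₅·e₆ + 3)`, `a > 0`, acts on each half-spin
module `Δ₆^±` (the `±i`-eigenspaces of the volume element `e₁·e₂·e₃·e₄·e₅·e₆`) as a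
symmetric endomorphism with eigenvalues `(0, 4a, 4a, 4a)`. -/
theorem stmt_16 {Δ : Type*} [NormedAddCommGroup Δ] [InnerProductSpace ℂ Δ]
    [FiniteDimensional ℂ Δ]
    (hdim : Module.finrank ℂ Δ = 8)
    (c : Fin 6 → Δ →ₗ[ℂ] Δ)
    (hcl : ∀ i j ψ, c i (c j ψ) + c j (c i ψ) = if i = j then (-2 : ℂ) • ψ else 0)
    (hsk : ∀ i (ψ φ : Δ), ⟪c i ψ, φ⟫ = - ⟪ψ, c i φ⟫)
    (a : ℝ) (ha : 0 < a)
    (A : Δ → Δ)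
    (hA : ∀ ψ, A ψ = ((a : ℝ) : ℂ) •
      (c 0 (c 1 (c 2 (c 3 ψ))) + c 0 (c 1 (c 4 (c 5 ψ))) + c 2 (c 3 (c 4 (c 5 ψ)))
        + (3 : ℂ) • ψ))
    (V : Δ →ₗ[ℂ] Δ)
    (hV : V = c 0 ∘ₗ c 1 ∘ₗ c 2 ∘ₗ c 3 ∘ₗ c 4 ∘ₗ c 5) :
    (∀ ψ φ : Δ, ⟪A ψ, φ⟫ = ⟪ψ, A φ⟫)
    ∧ ∀ ε : ℂ, (ε = Complex.I ∨ ε = - Complex.I) →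
        (∀ ψ ∈ Module.End.eigenspace V ε, A ψ ∈ Module.End.eigenspace V ε)
        ∧ ∃ b : OrthonormalBasis (Fin 4) ℂ (Module.End.eigenspace V ε),
            ∀ m, A (b m : Δ)
              = (((![0, 4 * a, 4 * a, 4 * a] : Fin 4 → ℝ) m : ℝ) : ℂ) • (b m : Δ) :=
  stmt_16_general hdim c hcl hsk a A hA V hV
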